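/- arXiv:2404.04754 — 2 statements merged into one kernel-verified Lean document; each statement's English description precedes it below -/
import Mathlib

section
/- Let 2 ≤ k ≤ n and, for 1 ≤ j ≤ k, let n_j ≤ n and L_j : ℝⁿ → ℝ^{n_j} be surjective linear maps. Then the following are equivalent: (a) for every linear subspace V of ℝⁿ, (k−1)·dim V ≤ Σ_{j=1}^k dim(L_j(V)); (b) dim(ker L_1 + ⋯ + ker L_k) = Σ_{j=1}^k dim(ker L_j), i.e. the kernels ker L_1, …, ker L_k are independent subspaces of ℝⁿ. -/
/-! Rank–nullity for `L j` restricted to `V` gives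
`∑ j, dim L j(V) + ∑ j, dim (V ⊓ ker L j) = k · dim V`, so (a) says that
`∑ j, dim (V ⊓ ker L j) ≤ dim V` for every `V`. If the kernels are independent, so are the
subspaces `V ⊓ ker L j` of `V`, which gives this bound; conversely, the bound for
`V = ⨆ j, ker L j` is the nontrivial half of (b). Independence of finitely many subspaces is
equivalent to (b) by rank–nullity for the summation map `⨁ j, W j → E`. -/

open Module Submodule

variable {K E : Type*} [DivisionRing K] [AddCommGroup E] [Module K E] [FiniteDimensional K E]

theorem Submodule.finrank_map_add_finrank_inf_ker {F : Type*} [AddCommGroup F] [Module K F]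
    (f : E →ₗ[K] F) (V : Submodule K E) :
    finrank K (V.map f) + finrank K ↥(V ⊓ LinearMap.ker f) = finrank K V := by
  have h := LinearMap.finrank_range_add_finrank_ker (f.domRestrict V)
  rw [LinearMap.range_domRestrict, LinearMap.ker_domRestrict] at h
  have hker := (equivMapOfInjective V.subtype V.injective_subtype
    ((LinearMap.ker f).comap V.subtype)).finrank_eq
  rw [map_comap_subtype] at hker
  rwa [hker] at h

section iSupIndep

variable {ι : Type*} [Fintype ι]

theorem finrank_iSup_add_finrank_ker_lsum [DecidableEq ι] (W : ι → Submodule K E) :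
    finrank K ↥(⨆ i, W i) + finrank K (LinearMap.ker (DFinsupp.lsum ℕ fun i => (W i).subtype))
      = ∑ i, finrank K (W i) := by
  rw [iSup_eq_range_dfinsupp_lsum, LinearMap.finrank_range_add_finrank_ker]
  exact finrank_directSum K fun i => W i

theorem finrank_iSup_le_sum (W : ι → Submodule K E) :
    finrank K ↥(⨆ i, W i) ≤ ∑ i, finrank K (W i) := by
  classical
  exact (finrank_iSup_add_finrank_ker_lsum W).symm ▸ Nat.le_add_right _ _

theorem iSupIndep_iff_finrank_iSup_eq_sum (W : ι → Submodule K E) :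
    iSupIndep W ↔ finrank K ↥(⨆ i, W i) = ∑ i, finrank K (W i) := by
  classical
  rw [iSupIndep_iff_dfinsupp_lsum_injective, ← LinearMap.ker_eq_bot, ← finrank_eq_zero,
    ← finrank_iSup_add_finrank_ker_lsum W]
  omega

theorem iSupIndep_iff_forall_sum_finrank_inf_le (W : ι → Submodule K E) :
    iSupIndep W ↔ ∀ V : Submodule K E, ∑ i, finrank K ↥(V ⊓ W i) ≤ finrank K V := by
  refine ⟨fun hW V => ?_, fun h => ?_⟩
  · have hVW : iSupIndep fun i => V ⊓ W i := hW.mono fun i => inf_le_right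
    rw [← (iSupIndep_iff_finrank_iSup_eq_sum _).mp hVW]
    exact finrank_mono (iSup_le fun i => inf_le_left)
  · have h_top := h (⨆ i, W i)
    have h_inf (i : ι) : finrank K ↥((⨆ j, W j) ⊓ W i) = finrank K (W i) := by
      rw [inf_eq_right.mpr (le_iSup W i)]
    simp only [h_inf] at h_top
    exact (iSupIndep_iff_finrank_iSup_eq_sum W).mpr (finrank_iSup_le_sum W |>.antisymm h_top)

end iSupIndep

theorem card_sub_one_mul_finrank_le_sum_finrank_map_iff {ι : Type*} [Fintype ι] [Nonempty ι]
    {F : ι → Type*} [∀ i, AddCommGroup (F i)] [∀ i, Module K (F i)]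
    (f : ∀ i, E →ₗ[K] F i) (V : Submodule K E) :
    (Fintype.card ι - 1) * finrank K V ≤ ∑ i, finrank K (V.map (f i))
      ↔ ∑ i, finrank K ↥(V ⊓ LinearMap.ker (f i)) ≤ finrank K V := by
  have h_total : ∑ i, finrank K (V.map (f i)) + ∑ i, finrank K ↥(V ⊓ LinearMap.ker (f i))
      = Fintype.card ι * finrank K V := by
    simp only [← Finset.sum_add_distrib, finrank_map_add_finrank_inf_ker, Finset.sum_const,
      Finset.card_univ, smul_eq_mul]
  have h_card : (Fintype.card ι - 1) * finrank K V + finrank K V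
      = Fintype.card ι * finrank K V := by
    rw [← Nat.succ_mul, Nat.succ_eq_add_one, Nat.sub_add_cancel Fintype.card_pos]
  omega

theorem stmt_4_general (n k : ℕ) (hk2 : 2 ≤ k)
    (m : Fin k → ℕ)
    (L : (j : Fin k) → (EuclideanSpace ℝ (Fin n)) →ₗ[ℝ] (EuclideanSpace ℝ (Fin (m j)))) :
    (∀ V : Submodule ℝ (EuclideanSpace ℝ (Fin n)),
        (k - 1) * Module.finrank ℝ ↥V ≤ ∑ j, Module.finrank ℝ ↥(V.map (L j)))
      ↔ (Module.finrank ℝ ↥(⨆ j, LinearMap.ker (L j))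
          = ∑ j, Module.finrank ℝ ↥(LinearMap.ker (L j))) := by
  have : Nonempty (Fin k) := ⟨⟨0, by omega⟩⟩
  rw [← iSupIndep_iff_finrank_iSup_eq_sum, iSupIndep_iff_forall_sum_finrank_inf_le]
  simpa only [Fintype.card_fin] using
    forall_congr' fun V => card_sub_one_mul_finrank_le_sum_finrank_map_iff L V

/-- For surjective linear maps `L j : ℝⁿ → ℝ^{n j}`, `1 ≤ j ≤ k`, the
Bennett–Carbery–Christ–Tao condition with exponents `p j = 1/(k-1)`, i.e.
`(k-1) · dim V ≤ ∑ j dim (L j V)` for every subspace `V ≤ ℝⁿ`, is equivalent to the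
independence of the kernels `ker (L j)`. -/
theorem stmt_4 (n k : ℕ) (hk2 : 2 ≤ k) (hkn : k ≤ n)
    (m : Fin k → ℕ) (hm : ∀ j, m j ≤ n)
    (L : (j : Fin k) → (EuclideanSpace ℝ (Fin n)) →ₗ[ℝ] (EuclideanSpace ℝ (Fin (m j))))
    (hL : ∀ j, Function.Surjective (L j)) :
    (∀ V : Submodule ℝ (EuclideanSpace ℝ (Fin n)),
        (k - 1) * Module.finrank ℝ ↥V ≤ ∑ j, Module.finrank ℝ ↥(V.map (L j)))
      ↔ (Module.finrank ℝ ↥(⨆ j, LinearMap.ker (L j))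
          = ∑ j, Module.finrank ℝ ↥(LinearMap.ker (L j))) :=
  stmt_4_general n k hk2 m L
end

section
/- Let 2 ≤ k ≤ n and, for 1 ≤ j ≤ k, let Σ'_j : U'_j → ℝⁿ be a regular parametrisation of a d'_j-dimensional submanifold S'_j of ℝⁿ with Σ'_j(0) = ξ'_j, and set L_j := (DΣ'_j(0))ᵀ : ℝⁿ → ℝ^{d'_j}. Then the following are equivalent: (a) for every linear subspace V of ℝⁿ, (k−1)·dim V ≤ Σ_{j=1}^k dim(L_j(V)); (b) the normal spaces N_{ξ'_1}S'_1, …, N_{ξ'_k}S'_k are independent, i.e. dim(Σ_{j=1}^k N_{ξ'_j}S'_j) = Σ_{j=1}^k dim N_{ξ'_j}S'_j. -/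
open Module Submodule

private theorem aux_ker_adjoint {E F : Type*} [NormedAddCommGroup E] [InnerProductSpace ℝ E]
    [NormedAddCommGroup F] [InnerProductSpace ℝ F] [FiniteDimensional ℝ E]
    [FiniteDimensional ℝ F] (T : E →L[ℝ] F) :
    LinearMap.ker (ContinuousLinearMap.adjoint T).toLinearMap
      = (LinearMap.range T.toLinearMap)ᗮ := by
  ext x
  simp only [LinearMap.mem_ker, Submodule.mem_orthogonal, ContinuousLinearMap.coe_coe,
    LinearMap.mem_range, forall_exists_index]
  constructor
  · rintro h y u rfl
    rw [← ContinuousLinearMap.adjoint_inner_right, h, inner_zero_right]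
  · intro h
    have := h (T (ContinuousLinearMap.adjoint T x)) (ContinuousLinearMap.adjoint T x) rfl
    rwa [← ContinuousLinearMap.adjoint_inner_right, real_inner_self_eq_norm_sq,
      pow_eq_zero_iff (by norm_num), norm_eq_zero] at this

private theorem aux_rank_nullity {E F : Type*} [NormedAddCommGroup E] [InnerProductSpace ℝ E]
    [NormedAddCommGroup F] [InnerProductSpace ℝ F] [FiniteDimensional ℝ E]
    (f : E →ₗ[ℝ] F) (V : Submodule ℝ E) :
    finrank ℝ ↥(V.map f) + finrank ℝ ↥(V ⊓ LinearMap.ker f) = finrank ℝ ↥V := by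
  have h := LinearMap.finrank_range_add_finrank_ker (f.domRestrict V)
  rw [LinearMap.range_domRestrict, LinearMap.ker_domRestrict] at h
  rw [← h]
  congr 1
  rw [← Submodule.finrank_map_subtype_eq V, Submodule.map_comap_subtype]

private theorem aux_sup_le {E : Type*} [NormedAddCommGroup E] [InnerProductSpace ℝ E]
    [FiniteDimensional ℝ E] {ι : Type*} [DecidableEq ι]
    (s : Finset ι) (N : ι → Submodule ℝ E) :
    finrank ℝ ↥(s.sup N) ≤ ∑ j ∈ s, finrank ℝ ↥(N j) := by
  induction s using Finset.induction with
  | empty => simp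
  | insert _ _ hns ih =>
    rw [Finset.sup_insert, Finset.sum_insert hns]
    exact le_trans (Submodule.finrank_add_le_finrank_add_finrank _ _) (by omega)

private theorem aux_transfer {E : Type*} [NormedAddCommGroup E] [InnerProductSpace ℝ E]
    [FiniteDimensional ℝ E] {ι : Type*} [DecidableEq ι]
    (s : Finset ι) (N W : ι → Submodule ℝ E) (hW : ∀ j, W j ≤ N j)
    (h : finrank ℝ ↥(s.sup N) = ∑ j ∈ s, finrank ℝ ↥(N j)) :
    finrank ℝ ↥(s.sup W) = ∑ j ∈ s, finrank ℝ ↥(W j) := by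
  induction s using Finset.induction with
  | empty => simp
  | @insert a s hns ih =>
    rw [Finset.sup_insert, Finset.sum_insert hns] at h ⊢
    have h1 := Submodule.finrank_sup_add_finrank_inf_eq (N a) (s.sup N)
    have h2 := aux_sup_le s N
    have hsupN : finrank ℝ ↥(s.sup N) = ∑ j ∈ s, finrank ℝ ↥(N j) := by omega
    have hinfN : finrank ℝ ↥(N a ⊓ s.sup N) = 0 := by omega
    have hbotN : N a ⊓ s.sup N = ⊥ := Submodule.finrank_eq_zero.mp hinfN
    have hbotW : W a ⊓ s.sup W = ⊥ := by
      rw [← le_bot_iff, ← hbotN]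
      exact inf_le_inf (hW a) (Finset.sup_mono_fun fun j _ => hW j)
    have h3 := Submodule.finrank_sup_add_finrank_inf_eq (W a) (s.sup W)
    rw [hbotW, finrank_bot, add_zero] at h3
    rw [h3, ih hsupN]

/-- For regular parametrisations `Sig_j : U'_j → ℝⁿ` of `d'_j`-dimensional
submanifolds `S'_j` with `Sig_j(0) = ξ'_j`, setting `L_j := (DSig_j(0))ᵀ`, the
Brascamp–Lieb condition `(k-1)·dim V ≤ ∑ j dim (L_j V)` for all subspaces `V ≤ ℝⁿ`
is equivalent to the independence of the normal spaces `N_{ξ'_j} S'_j`, i.e.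
`dim (∑ j N_{ξ'_j}S'_j) = ∑ j dim N_{ξ'_j}S'_j`. Here the normal space is the
orthogonal complement of the range of `DSig_j(0)`, and the transpose is realised as
the (real) adjoint. -/
theorem stmt_5 (n k : ℕ) (hk2 : 2 ≤ k) (hkn : k ≤ n)
    (d' : Fin k → ℕ) (hd'1 : ∀ j, 1 ≤ d' j) (hd'n : ∀ j, d' j ≤ n)
    (U' : (j : Fin k) → Set (EuclideanSpace ℝ (Fin (d' j))))
    (hU'open : ∀ j, IsOpen (U' j)) (hU'conn : ∀ j, IsConnected (U' j))
    (hU'0 : ∀ j, (0 : EuclideanSpace ℝ (Fin (d' j))) ∈ U' j)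
    (Sig : (j : Fin k) → EuclideanSpace ℝ (Fin (d' j)) → EuclideanSpace ℝ (Fin n))
    (hSigsm : ∀ j, ContDiffOn ℝ (⊤ : ℕ∞) (Sig j) (U' j))
    (hSiginj : ∀ j, Set.InjOn (Sig j) (U' j))
    (hSigreg : ∀ j, ∀ u ∈ U' j,
      Module.finrank ℝ ↥(LinearMap.range (fderiv ℝ (Sig j) u).toLinearMap) = d' j) :
    (∀ V : Submodule ℝ (EuclideanSpace ℝ (Fin n)),
        (k - 1) * Module.finrank ℝ ↥V
          ≤ ∑ j, Module.finrank ℝ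
              ↥(V.map (ContinuousLinearMap.adjoint (fderiv ℝ (Sig j) 0)).toLinearMap))
      ↔ (Module.finrank ℝ
            ↥(⨆ j, (LinearMap.range (fderiv ℝ (Sig j) 0).toLinearMap)ᗮ)
          = ∑ j, Module.finrank ℝ
              ↥((LinearMap.range (fderiv ℝ (Sig j) 0).toLinearMap)ᗮ)) := by
  set L : (j : Fin k) →
      EuclideanSpace ℝ (Fin n) →ₗ[ℝ] EuclideanSpace ℝ (Fin (d' j)) :=
    fun j => (ContinuousLinearMap.adjoint (fderiv ℝ (Sig j) 0)).toLinearMap with hL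
  set N : Fin k → Submodule ℝ (EuclideanSpace ℝ (Fin n)) :=
    fun j => (LinearMap.range (fderiv ℝ (Sig j) 0).toLinearMap)ᗮ with hN
  have hker : ∀ j, LinearMap.ker (L j) = N j := fun j => aux_ker_adjoint _
  -- rank–nullity for each j and each V
  have hrn : ∀ (V : Submodule ℝ (EuclideanSpace ℝ (Fin n))) (j : Fin k),
      finrank ℝ ↥(V.map (L j)) + finrank ℝ ↥(V ⊓ N j) = finrank ℝ ↥V := by
    intro V j
    rw [← hker j]
    exact aux_rank_nullity (L j) V
  have hsum : ∀ V : Submodule ℝ (EuclideanSpace ℝ (Fin n)),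
      (∑ j, finrank ℝ ↥(V.map (L j))) + ∑ j, finrank ℝ ↥(V ⊓ N j)
        = k * finrank ℝ ↥V := by
    intro V
    rw [← Finset.sum_add_distrib]
    simp [hrn V, Finset.sum_const, mul_comm]
  have hkmul : ∀ D : ℕ, k * D = (k - 1) * D + D := by
    intro D
    obtain ⟨m, rfl⟩ : ∃ m, k = m + 1 := ⟨k - 1, by omega⟩
    rw [Nat.add_sub_cancel, add_mul, one_mul]
  have hiSup : ∀ W : Fin k → Submodule ℝ (EuclideanSpace ℝ (Fin n)),
      ⨆ j, W j = Finset.univ.sup W := by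
    intro W
    exact (Finset.sup_univ_eq_iSup W).symm
  constructor
  · -- (a) → (b)
    intro ha
    show finrank ℝ ↥(⨆ j, N j) = ∑ j, finrank ℝ ↥(N j)
    set V := ⨆ j, N j with hV
    have hNle : ∀ j, N j ≤ V := fun j => le_iSup N j
    have hinf : ∀ j, V ⊓ N j = N j := fun j => inf_eq_right.mpr (hNle j)
    have h1 : (k - 1) * finrank ℝ ↥V ≤ ∑ j, finrank ℝ ↥(V.map (L j)) := ha V
    have h2 := hsum V
    have h2' : ∑ j, finrank ℝ ↥(V ⊓ N j) = ∑ j, finrank ℝ ↥(N j) :=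
      Finset.sum_congr rfl fun j _ => by rw [hinf j]
    have hle : finrank ℝ ↥V ≤ ∑ j, finrank ℝ ↥(N j) := by
      rw [hV, hiSup N]
      exact aux_sup_le _ _
    have hk' := hkmul (finrank ℝ ↥V)
    omega
  · -- (b) → (a)
    intro hb V
    show (k - 1) * finrank ℝ ↥V ≤ ∑ j, finrank ℝ ↥(V.map (L j))
    have hb' : finrank ℝ ↥(Finset.univ.sup N) = ∑ j, finrank ℝ ↥(N j) := by
      rw [← hiSup N]; exact hb
    have htr := aux_transfer (Finset.univ) N (fun j => V ⊓ N j)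
      (fun j => inf_le_right) hb'
    have hle : Finset.univ.sup (fun j => V ⊓ N j) ≤ V :=
      Finset.sup_le fun j _ => inf_le_left
    have hle' : ∑ j, finrank ℝ ↥(V ⊓ N j) ≤ finrank ℝ ↥V := by
      rw [← htr]
      exact Submodule.finrank_mono hle
    have h2 := hsum V
    have hk' := hkmul (finrank ℝ ↥V)
    omega
end
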